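/- Let F : ℝᵐ → ℝᵐ be C¹ with symmetric Jacobian DF(u) ≥ δ Iₘ for all u ∈ ℝᵐ, where δ > 0. Then F is a bijection from ℝᵐ onto ℝᵐ. -/

import Mathlib

open scoped RealInnerProductSpace

/-- Global inverse function theorem for strongly monotone `C¹` maps: if `F : ℝᵐ → ℝᵐ` is
`C¹` with symmetric Jacobian satisfying `DF(u) ≥ δ Iₘ` (δ > 0), then `F` is a bijection. -/
theorem strongly_monotone_C1_bijective
    (m : ℕ) (F : EuclideanSpace ℝ (Fin m) → EuclideanSpace ℝ (Fin m)) (δ : ℝ) (hδ : 0 < δ)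
    (hF : ContDiff ℝ 1 F)
    (hsym : ∀ u w z, ⟪fderiv ℝ F u w, z⟫ = ⟪fderiv ℝ F u z, w⟫)
    (hpd : ∀ u w, δ * ‖w‖ ^ 2 ≤ ⟪fderiv ℝ F u w, w⟫) :
    Function.Bijective F := by
  have hdiff : Differentiable ℝ F := hF.differentiable one_ne_zero
  -- strong monotonicity
  have key : ∀ u v, δ * ‖u - v‖ ^ 2 ≤ ⟪F u - F v, u - v⟫ := by
    intro u v
    set w := u - v with hw
    set φ : ℝ → ℝ := fun t => ⟪F (v + t • w), w⟫ - t * (δ * ‖w‖ ^ 2) with hφdef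
    have hφ : ∀ t : ℝ, HasDerivAt φ (⟪fderiv ℝ F (v + t • w) w, w⟫ - δ * ‖w‖ ^ 2) t := by
      intro t
      have h1 : HasDerivAt (fun t : ℝ => v + t • w) w t := by
        simpa using ((hasDerivAt_id t).smul_const w).const_add v
      have h2 : HasDerivAt (fun t : ℝ => F (v + t • w)) (fderiv ℝ F (v + t • w) w) t :=
        (hdiff (v + t • w)).hasFDerivAt.comp_hasDerivAt t h1
      have h3 : HasDerivAt (fun t : ℝ => ⟪F (v + t • w), w⟫)
          ⟪fderiv ℝ F (v + t • w) w, w⟫ t := by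
        simpa using h2.inner ℝ (hasDerivAt_const t w)
      have h4 : HasDerivAt (fun t : ℝ => t * (δ * ‖w‖ ^ 2)) (δ * ‖w‖ ^ 2) t := by
        simpa using (hasDerivAt_id t).mul_const (δ * ‖w‖ ^ 2)
      exact h3.sub h4
    have hmono : Monotone φ := by
      apply monotone_of_deriv_nonneg (fun t => (hφ t).differentiableAt)
      intro t
      rw [(hφ t).deriv]
      have := hpd (v + t • w) w
      linarith
    have h01 : φ 0 ≤ φ 1 := hmono zero_le_one
    have e0 : φ 0 = ⟪F v, w⟫ := by simp [hφdef]
    have e1 : φ 1 = ⟪F u, w⟫ - δ * ‖w‖ ^ 2 := by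
      have h : v + (1 : ℝ) • w = u := by rw [one_smul, hw]; abel
      simp only [hφdef, h, one_mul]
    rw [e0, e1] at h01
    rw [inner_sub_left]
    linarith
  -- expansion estimate
  have hdist : ∀ a b, δ * dist a b ≤ dist (F a) (F b) := by
    intro a b
    rcases eq_or_ne a b with rfl | hab
    · simp
    · have h1 := key a b
      have h2 : ⟪F a - F b, a - b⟫ ≤ ‖F a - F b‖ * ‖a - b‖ := real_inner_le_norm _ _
      have h3 : 0 < ‖a - b‖ := by
        rw [norm_pos_iff]; exact sub_ne_zero_of_ne hab
      rw [dist_eq_norm, dist_eq_norm]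
      nlinarith
  have hinj : Function.Injective F := by
    intro a b hab
    have := hdist a b
    rw [hab, dist_self] at this
    have : dist a b ≤ 0 := by nlinarith [dist_nonneg (x := a) (y := b)]
    exact dist_le_zero.mp this
  refine ⟨hinj, ?_⟩
  -- the derivative is invertible everywhere
  have hderiv_inj : ∀ u, Function.Injective (fderiv ℝ F u) := by
    intro u w₁ w₂ hw
    have h : fderiv ℝ F u (w₁ - w₂) = 0 := by
      rw [map_sub, hw, sub_self]
    have := hpd u (w₁ - w₂)
    rw [h, inner_zero_left] at this
    have : ‖w₁ - w₂‖ ^ 2 ≤ 0 := by nlinarith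
    have : ‖w₁ - w₂‖ = 0 := by nlinarith [norm_nonneg (w₁ - w₂), sq_nonneg ‖w₁ - w₂‖]
    rw [norm_eq_zero, sub_eq_zero] at this
    exact this
  -- open range
  have hopen : IsOpen (Set.range F) := by
    have hbij : ∀ u, Function.Bijective ((fderiv ℝ F u).toLinearMap) := fun u =>
      ⟨hderiv_inj u, (LinearMap.injective_iff_surjective).mp (hderiv_inj u)⟩
    let e : ∀ u : EuclideanSpace ℝ (Fin m),
        EuclideanSpace ℝ (Fin m) ≃L[ℝ] EuclideanSpace ℝ (Fin m) := fun u =>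
      (LinearEquiv.ofBijective _ (hbij u)).toContinuousLinearEquiv
    have hcoe : ∀ u, ((e u : EuclideanSpace ℝ (Fin m) →L[ℝ] EuclideanSpace ℝ (Fin m)))
        = fderiv ℝ F u := fun u => by ext x; rfl
    have hstrict : ∀ u, HasStrictFDerivAt F
        (e u : EuclideanSpace ℝ (Fin m) →L[ℝ] EuclideanSpace ℝ (Fin m)) u := fun u => by
      rw [hcoe u]
      exact hF.contDiffAt.hasStrictFDerivAt one_ne_zero
    exact (isOpenMap_of_hasStrictFDerivAt_equiv hstrict).isOpen_range
  -- closed range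
  have hclosed : IsClosed (Set.range F) := by
    apply IsSeqClosed.isClosed
    intro x y hx hxy
    choose u hu using hx
    have hxc : CauchySeq x := hxy.cauchySeq
    have hcauchy : CauchySeq u := by
      rw [Metric.cauchySeq_iff] at hxc ⊢
      intro ε hε
      obtain ⟨N, hN⟩ := hxc (δ * ε) (by positivity)
      refine ⟨N, fun i hi j hj => ?_⟩
      have h1 := hdist (u i) (u j)
      rw [hu i, hu j] at h1
      have h2 := hN i hi j hj
      have : δ * dist (u i) (u j) < δ * ε := lt_of_le_of_lt h1 h2
      exact lt_of_mul_lt_mul_left this hδ.le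
    obtain ⟨l, hl⟩ := cauchySeq_tendsto_of_complete hcauchy
    have : Filter.Tendsto (fun n => F (u n)) Filter.atTop (nhds (F l)) :=
      (hdiff.continuous.continuousAt).tendsto.comp hl
    have hFl : F l = y := by
      apply tendsto_nhds_unique _ hxy
      simpa [hu] using this
    exact ⟨l, hFl⟩
  -- clopen nonempty range in connected space
  have hne : (Set.range F).Nonempty := ⟨F 0, Set.mem_range_self 0⟩
  have : Set.range F = Set.univ := IsClopen.eq_univ ⟨hclosed, hopen⟩ hne
  exact Set.range_eq_univ.mp this
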